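/- Let Λ be a finite-dimensional algebra over a field, let D ⊔ U[1] be a semibrick pair that is singly left mutation compatible at S ∈ D, and write μ_S^+(D ⊔ U[1]) = D_S ⊔ U_S[1]. If W is a wide subcategory of mod Λ containing every module in D ∪ U, then W contains every module in D_S ∪ U_S. -/

import Mathlib

/-!
Every module of the mutation is obtained from `S` and the members of `D ∪ U` by the operations
a wide subcategory is closed under: `Filt(S)` lies in `W` by induction along a filtration, a new
member of `D` is an extension of `T ∈ D` by a module of `Filt(S)` or the cokernel of an
approximation `T → S_T` with `T ∈ U`, and a new member of `U` is `S` or the kernel of such an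
approximation.
-/

open CategoryTheory

attribute [local instance] HasDerivedCategory.standard

namespace Paper

variable (K Λ : Type) [Field K] [Ring Λ] [Algebra K Λ] [FiniteDimensional K Λ]

/-- A brick: a finite module whose endomorphism ring is a division ring. -/
def IsBrick (S : ModuleCat.{0} Λ) : Prop :=
  Module.Finite Λ S ∧ Nontrivial S ∧ ∀ f : S →ₗ[Λ] S, f ≠ 0 → Function.Bijective f

/-- Hom_Λ(A,B) = 0. -/
def NoHom (A B : ModuleCat.{0} Λ) : Prop := ∀ f : A →ₗ[Λ] B, f = 0

/-- Ext¹_Λ(A,B) = 0 : every short exact sequence 0 → B → E → A → 0 splits. -/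
def Ext1Vanish (A B : ModuleCat.{0} Λ) : Prop :=
  ∀ (E : ModuleCat.{0} Λ) (i : B →ₗ[Λ] E) (p : E →ₗ[Λ] A),
    Function.Injective i → Function.Surjective p → LinearMap.range i = LinearMap.ker p →
    ∃ s : A →ₗ[Λ] E, p.comp s = LinearMap.id

/-- A semibrick: a set of bricks which are pairwise hom-orthogonal. -/
def IsSemibrick (D : Set (ModuleCat.{0} Λ)) : Prop :=
  (∀ S ∈ D, IsBrick Λ S) ∧ ∀ S ∈ D, ∀ T ∈ D, S ≠ T → NoHom Λ S T ∧ NoHom Λ T S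

/-- A semibrick pair `D ⊔ U[1]`. -/
def IsSemibrickPair (D U : Set (ModuleCat.{0} Λ)) : Prop :=
  IsSemibrick Λ D ∧ IsSemibrick Λ U ∧
    ∀ S ∈ D, ∀ T ∈ U, NoHom Λ S T ∧ Ext1Vanish Λ S T

/-- `Y` is a direct summand (retract) of `X`. -/
def IsRetractOf {C : Type*} [Category C] (Y X : C) : Prop :=
  ∃ (s : Y ⟶ X) (r : X ⟶ Y), s ≫ r = 𝟙 Y

/-- `D ⊔ U[1]` is a 2-term simple minded collection: it is a semibrick pair and the
smallest triangulated subcategory of `D^b(mod Λ)` (realized as the objects of the derived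
category of `Mod Λ` with bounded, finitely generated homology) containing
`{S : S ∈ D} ∪ {T[1] : T ∈ U}` and closed under direct summands is all of `D^b(mod Λ)`. -/
def IsTwoTermSMC (D U : Set (ModuleCat.{0} Λ)) : Prop :=
  IsSemibrickPair Λ D U ∧
  ∀ (S : ObjectProperty (DerivedCategory (ModuleCat.{0} Λ))), S.IsTriangulated →
    (∀ X Y, S X → IsRetractOf Y X → S Y) →
    (∀ M ∈ D, S ((DerivedCategory.singleFunctor (ModuleCat.{0} Λ) 0).obj M)) →
    (∀ M ∈ U, S (((DerivedCategory.singleFunctor (ModuleCat.{0} Λ) 0).obj M)⟦(1:ℤ)⟧)) →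
    ∀ Z : DerivedCategory (ModuleCat.{0} Λ),
      (∃ a b : ℤ, ∀ n : ℤ, (n < a ∨ b < n) →
        Subsingleton ((DerivedCategory.homologyFunctor (ModuleCat.{0} Λ) n).obj Z)) →
      (∀ n : ℤ, Module.Finite Λ ((DerivedCategory.homologyFunctor (ModuleCat.{0} Λ) n).obj Z)) →
      S Z

/-- `D ⊆ D'` up to isomorphism. -/
def SubsetUpToIso (D D' : Set (ModuleCat.{0} Λ)) : Prop :=
  ∀ S ∈ D, ∃ S' ∈ D', Nonempty (S ≅ S')

/-- The semibrick pair `D ⊔ U[1]` is completable. -/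
def Completable (D U : Set (ModuleCat.{0} Λ)) : Prop :=
  ∃ D' U', IsTwoTermSMC Λ D' U' ∧ SubsetUpToIso Λ D D' ∧ SubsetUpToIso Λ U U'

/-- The semibrick pair `D ⊔ U[1]` is pairwise completable. -/
def PairwiseCompletable (D U : Set (ModuleCat.{0} Λ)) : Prop :=
  ∀ S ∈ D, ∀ T ∈ U, ∃ D' U', IsTwoTermSMC Λ D' U' ∧
    (∃ S' ∈ D', Nonempty (S ≅ S')) ∧ (∃ T' ∈ U', Nonempty (T ≅ T'))

/-- `Λ` has the pairwise 2-simple minded completability property. -/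
def PairwiseCompletabilityProperty : Prop :=
  ∀ D U : Set (ModuleCat.{0} Λ), IsSemibrickPair Λ D U →
    PairwiseCompletable Λ D U → Completable Λ D U

/-- `Λ` is τ-tilting finite: only finitely many bricks up to isomorphism. -/
def TauTiltingFinite : Prop :=
  ∃ (n : ℕ) (f : Fin n → ModuleCat.{0} Λ),
    ∀ M : ModuleCat.{0} Λ, IsBrick Λ M → ∃ i, Nonempty (M ≅ f i)

/-- `rk Λ = n` : there are exactly `n` isomorphism classes of simple `Λ`-modules. -/
def AlgebraRank (n : ℕ) : Prop :=
  ∃ f : Fin n → ModuleCat.{0} Λ,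
    (∀ i, IsSimpleModule Λ (f i)) ∧
    (∀ i j, i ≠ j → ¬ Nonempty (f i ≅ f j)) ∧
    (∀ M : ModuleCat.{0} Λ, IsSimpleModule Λ M → ∃ i, Nonempty (M ≅ f i))

/-- `X` belongs to `Filt(C)` : it has a finite filtration whose subquotients are
isomorphic to members of `C`. -/
def FiltClass (C : Set (ModuleCat.{0} Λ)) (X : ModuleCat.{0} Λ) : Prop :=
  ∃ (n : ℕ) (c : Fin (n + 1) → Submodule Λ X),
    c 0 = ⊥ ∧ c (Fin.last n) = ⊤ ∧ (∀ i : Fin n, c i.castSucc ≤ c i.succ) ∧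
    ∀ i : Fin n, ∃ Z ∈ C,
      Nonempty ((↥(c i.succ) ⧸ (Submodule.comap (c i.succ).subtype (c i.castSucc))) ≃ₗ[Λ] Z)

/-- `X ∈ Filt(S)` for a single module `S`. -/
def IsFiltBy (S X : ModuleCat.{0} Λ) : Prop := FiltClass Λ {S} X

/-- `f : T → A` is a minimal left `Filt(S)`-approximation. -/
def IsMinimalLeftFiltApprox (S T A : ModuleCat.{0} Λ) (f : T →ₗ[Λ] A) : Prop :=
  IsFiltBy Λ S A ∧
  (∀ N : ModuleCat.{0} Λ, IsFiltBy Λ S N → ∀ j : T →ₗ[Λ] N,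
      ∃ h : A →ₗ[Λ] N, h.comp f = j) ∧
  (∀ h : A →ₗ[Λ] A, h.comp f = f → Function.Bijective h)

/-- The semibrick pair `D ⊔ U[1]` is singly left mutation compatible at `S ∈ D`. -/
def SinglyLeftCompatAt (D U : Set (ModuleCat.{0} Λ)) (S : ModuleCat.{0} Λ) : Prop :=
  S ∈ D ∧ ∀ T ∈ U, ∃ (A : ModuleCat.{0} Λ) (g : T →ₗ[Λ] A),
    IsMinimalLeftFiltApprox Λ S T A g ∧ (Function.Injective g ∨ Function.Surjective g)

/-- The short exact sequence `0 → A → E → T → 0` (with `A ∈ Filt S`) corresponds to the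
minimal left `Filt(S)`-approximation `T[-1] → A` in `D^b(mod Λ)` : every extension of `T`
by a module of `Filt(S)` is a pushout of it, and it is left minimal. -/
def IsMinimalExtApprox (S T A E : ModuleCat.{0} Λ) (i : A →ₗ[Λ] E) (p : E →ₗ[Λ] T) : Prop :=
  IsFiltBy Λ S A ∧ Function.Injective i ∧ Function.Surjective p ∧
    LinearMap.range i = LinearMap.ker p ∧
  (∀ (N F : ModuleCat.{0} Λ) (j : N →ₗ[Λ] F) (q : F →ₗ[Λ] T), IsFiltBy Λ S N →
      Function.Injective j → Function.Surjective q → LinearMap.range j = LinearMap.ker q →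
      ∃ (h : A →ₗ[Λ] N) (φ : E →ₗ[Λ] F), j.comp h = φ.comp i ∧ q.comp φ = p) ∧
  (∀ h : A →ₗ[Λ] A,
      (∃ φ : E →ₗ[Λ] E, i.comp h = φ.comp i ∧ p.comp φ = p) → Function.Bijective h)

/-- `D' ⊔ U'[1]` is the left mutation `μ_S^+(D ⊔ U[1])` of the semibrick pair `D ⊔ U[1]`
at `S ∈ D`. -/
def IsLeftMutation (S : ModuleCat.{0} Λ) (D U D' U' : Set (ModuleCat.{0} Λ)) : Prop :=
  SinglyLeftCompatAt Λ D U S ∧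
  (∀ R : ModuleCat.{0} Λ, R ∈ D' ↔
    ((∃ T ∈ D, T ≠ S ∧ ∃ (A : ModuleCat.{0} Λ) (i : A →ₗ[Λ] R) (p : R →ₗ[Λ] T),
        IsMinimalExtApprox Λ S T A R i p) ∨
     (∃ T ∈ U, ∃ (A : ModuleCat.{0} Λ) (g : T →ₗ[Λ] A),
        IsMinimalLeftFiltApprox Λ S T A g ∧ Function.Injective g ∧ ¬ Function.Surjective g ∧
        Nonempty (R ≅ ModuleCat.of Λ (A ⧸ LinearMap.range g))))) ∧
  (∀ R : ModuleCat.{0} Λ, R ∈ U' ↔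
    (Nonempty (R ≅ S) ∨
     ∃ T ∈ U, ∃ (A : ModuleCat.{0} Λ) (g : T →ₗ[Λ] A),
        IsMinimalLeftFiltApprox Λ S T A g ∧ Function.Surjective g ∧ ¬ Function.Injective g ∧
        Nonempty (R ≅ ModuleCat.of Λ (LinearMap.ker g))))

/-- One left mutation step between semibrick pairs. -/
def MutStep (X Y : Set (ModuleCat.{0} Λ) × Set (ModuleCat.{0} Λ)) : Prop :=
  ∃ S : ModuleCat.{0} Λ, IsLeftMutation Λ S X.1 X.2 Y.1 Y.2

/-- The semibrick pair `D ⊔ U[1]` is mutation compatible. -/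
def MutationCompatible (D U : Set (ModuleCat.{0} Λ)) : Prop :=
  U = ∅ ∨ ∃ U' : Set (ModuleCat.{0} Λ),
    Relation.ReflTransGen (MutStep Λ) (D, U) (∅, U')

/-- `S` is a `K`-stone: a brick with `End(S) ≅ K` and no self-extensions. -/
def IsKStone (S : ModuleCat.{0} Λ) : Prop :=
  IsBrick Λ S ∧ (∀ f : S →ₗ[Λ] S, ∃ c : K, ∀ x : S, f x = (algebraMap K Λ c) • x) ∧
    Ext1Vanish Λ S S

/-- `Λ` is a `K`-stone algebra. -/
def KStoneAlgebra : Prop := ∀ S : ModuleCat.{0} Λ, IsBrick Λ S → IsKStone K Λ S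

/-- `dim_K Hom_Λ(T,A) = 1`. -/
def HomDimOne (T A : ModuleCat.{0} Λ) : Prop :=
  ∃ f : T →ₗ[Λ] A, f ≠ 0 ∧
    ∀ g : T →ₗ[Λ] A, ∃ c : K, ∀ x : T, g x = (algebraMap K Λ c) • f x

/-- A wide subcategory of `mod Λ` : a class of finite modules closed under isomorphism,
kernels, cokernels and extensions. -/
def IsWide (W : Set (ModuleCat.{0} Λ)) : Prop :=
  (∀ M ∈ W, Module.Finite Λ M) ∧
  (∀ M ∈ W, ∀ N : ModuleCat.{0} Λ, Nonempty (M ≅ N) → N ∈ W) ∧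
  (∀ M ∈ W, ∀ N ∈ W, ∀ f : M →ₗ[Λ] N, ModuleCat.of Λ (LinearMap.ker f) ∈ W) ∧
  (∀ M ∈ W, ∀ N ∈ W, ∀ f : M →ₗ[Λ] N, ModuleCat.of Λ (N ⧸ LinearMap.range f) ∈ W) ∧
  (∀ (A E B : ModuleCat.{0} Λ), A ∈ W → B ∈ W → Module.Finite Λ E →
    ∀ (i : A →ₗ[Λ] E) (p : E →ₗ[Λ] B), Function.Injective i → Function.Surjective p →
      LinearMap.range i = LinearMap.ker p → E ∈ W)

/-- A simple object of the wide subcategory `W`. -/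
def IsWSimple (W : Set (ModuleCat.{0} Λ)) (M : ModuleCat.{0} Λ) : Prop :=
  M ∈ W ∧ Nontrivial M ∧
    ∀ N : Submodule Λ M, ModuleCat.of Λ N ∈ W → N = ⊥ ∨ N = ⊤

/-- The wide subcategory `W` has rank `n`: it has exactly `n` isomorphism classes of
simple objects. -/
def WideRank (W : Set (ModuleCat.{0} Λ)) (n : ℕ) : Prop :=
  ∃ f : Fin n → ModuleCat.{0} Λ,
    (∀ i, IsWSimple Λ W (f i)) ∧
    (∀ i j, i ≠ j → ¬ Nonempty (f i ≅ f j)) ∧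
    (∀ M : ModuleCat.{0} Λ, IsWSimple Λ W M → ∃ i, Nonempty (M ≅ f i))

/-- The smallest wide subcategory containing a class `C` of modules. -/
def smallestWide (C : Set (ModuleCat.{0} Λ)) : Set (ModuleCat.{0} Λ) :=
  {M | ∀ W : Set (ModuleCat.{0} Λ), IsWide Λ W → C ⊆ W → M ∈ W}

/-- `X ∈ Fac(C)` : `X` is a quotient of a finite direct sum of members of `C`. -/
def FacClass (C : Set (ModuleCat.{0} Λ)) (X : ModuleCat.{0} Λ) : Prop :=
  ∃ (n : ℕ) (f : Fin n → ModuleCat.{0} Λ), (∀ i, f i ∈ C) ∧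
    ∃ p : ((i : Fin n) → f i) →ₗ[Λ] X, Function.Surjective p

/-- `X ∈ Sub(C)` : `X` is a submodule of a finite direct sum of members of `C`. -/
def SubClass (C : Set (ModuleCat.{0} Λ)) (X : ModuleCat.{0} Λ) : Prop :=
  ∃ (n : ℕ) (f : Fin n → ModuleCat.{0} Λ), (∀ i, f i ∈ C) ∧
    ∃ j : X →ₗ[Λ] ((i : Fin n) → f i), Function.Injective j

/-- An indecomposable module. -/
def Indec (M : ModuleCat.{0} Λ) : Prop :=
  Nontrivial M ∧ ∀ N₁ N₂ : Submodule Λ M, IsCompl N₁ N₂ → N₁ = ⊥ ∨ N₂ = ⊥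


section

variable {Λ} {W : Set (ModuleCat.{0} Λ)}

theorem IsWide.mem_of_iso (hW : IsWide Λ W) {M N : ModuleCat.{0} Λ} (hM : M ∈ W)
    (e : M ≅ N) : N ∈ W :=
  hW.2.1 M hM N ⟨e⟩

theorem IsWide.mem_of_linearEquiv (hW : IsWide Λ W) {M N : ModuleCat.{0} Λ} (hM : M ∈ W)
    (e : M ≃ₗ[Λ] N) : N ∈ W :=
  hW.mem_of_iso hM e.toModuleIso

theorem IsWide.ker_mem (hW : IsWide Λ W) {M N : ModuleCat.{0} Λ} (hM : M ∈ W) (hN : N ∈ W)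
    (f : M →ₗ[Λ] N) : ModuleCat.of Λ (LinearMap.ker f) ∈ W :=
  hW.2.2.1 M hM N hN f

theorem IsWide.coker_mem (hW : IsWide Λ W) {M N : ModuleCat.{0} Λ} (hM : M ∈ W) (hN : N ∈ W)
    (f : M →ₗ[Λ] N) : ModuleCat.of Λ (N ⧸ LinearMap.range f) ∈ W :=
  hW.2.2.2.1 M hM N hN f

theorem IsWide.mem_of_subsingleton (hW : IsWide Λ W) (hne : W.Nonempty)
    (X : ModuleCat.{0} Λ) [Subsingleton X] : X ∈ W := by
  obtain ⟨M, hM⟩ := hne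
  have : Subsingleton (LinearMap.ker (LinearMap.id : M →ₗ[Λ] M)) := by
    rw [LinearMap.ker_id]
    infer_instance
  exact hW.mem_of_linearEquiv (hW.ker_mem hM hM LinearMap.id) (LinearEquiv.ofSubsingleton _ _)

/-- The finiteness condition in the extension axiom of `IsWide` is automatic. -/
theorem IsWide.mem_of_exact (hW : IsWide Λ W) {A E B : ModuleCat.{0} Λ} (hA : A ∈ W)
    (hB : B ∈ W) {i : A →ₗ[Λ] E} {p : E →ₗ[Λ] B} (hi : Function.Injective i)
    (hp : Function.Surjective p) (hexact : LinearMap.range i = LinearMap.ker p) : E ∈ W :=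
  have := hW.1 A hA
  have := hW.1 B hB
  hW.2.2.2.2 A E B hA hB (Module.Finite.of_exact (LinearMap.exact_iff.2 hexact.symm) hp)
    i p hi hp hexact

theorem IsWide.mem_of_submodule_quotient (hW : IsWide Λ W) {M : ModuleCat.{0} Λ}
    (N : Submodule Λ M) (hN : ModuleCat.of Λ N ∈ W) (hQ : ModuleCat.of Λ (M ⧸ N) ∈ W) :
    M ∈ W :=
  hW.mem_of_exact (B := ModuleCat.of Λ (M ⧸ N)) hN hQ N.injective_subtype N.mkQ_surjective
    (by rw [Submodule.range_subtype, Submodule.ker_mkQ])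

theorem IsWide.mem_of_filtClass (hW : IsWide Λ W) (hne : W.Nonempty)
    {C : Set (ModuleCat.{0} Λ)} (hC : C ⊆ W) {X : ModuleCat.{0} Λ} (hX : FiltClass Λ C X) :
    X ∈ W := by
  obtain ⟨n, c, hbot, htop, hmono, hquot⟩ := hX
  have hstep : ∀ k : Fin (n + 1), ModuleCat.of Λ (c k) ∈ W := by
    intro k
    induction k using Fin.induction with
    | zero =>
      have : Subsingleton (c 0) := by
        rw [hbot]
        infer_instance
      exact hW.mem_of_subsingleton hne _
    | succ k ih =>
      obtain ⟨Z, hZ, ⟨e⟩⟩ := hquot k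
      exact hW.mem_of_submodule_quotient (M := ModuleCat.of Λ (c k.succ)) _
        (hW.mem_of_linearEquiv ih (Submodule.comapSubtypeEquivOfLe (hmono k)).symm)
        (hW.mem_of_linearEquiv (hC hZ) e.symm)
  have hlast := hstep (Fin.last n)
  rw [htop] at hlast
  exact hW.mem_of_linearEquiv hlast Submodule.topEquiv

end

theorem wide_contains_mutation
    (D U : Set (ModuleCat.{0} Λ))
    (S : ModuleCat.{0} Λ)
    (D' U' : Set (ModuleCat.{0} Λ)) (hmut : IsLeftMutation Λ S D U D' U')
    (W : Set (ModuleCat.{0} Λ)) (hW : IsWide Λ W) (hDU : D ∪ U ⊆ W) :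
    D' ∪ U' ⊆ W := by
  have hSW : S ∈ W := hDU (Or.inl hmut.1.1)
  have hfilt : ∀ A, IsFiltBy Λ S A → A ∈ W := fun _ hA =>
    hW.mem_of_filtClass ⟨S, hSW⟩ (Set.singleton_subset_iff.2 hSW) hA
  rintro R (hR | hR)
  · rcases (hmut.2.1 R).1 hR with ⟨T, hT, -, A, i, p, hA, hi, hp, hexact, -⟩ |
      ⟨T, hT, A, g, hg, -, -, ⟨e⟩⟩
    · exact hW.mem_of_exact (hfilt A hA) (hDU (Or.inl hT)) hi hp hexact
    · exact hW.mem_of_iso (hW.coker_mem (hDU (Or.inr hT)) (hfilt A hg.1) g) e.symm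
  · rcases (hmut.2.2 R).1 hR with ⟨⟨e⟩⟩ | ⟨T, hT, A, g, hg, -, -, ⟨e⟩⟩
    · exact hW.mem_of_iso hSW e.symm
    · exact hW.mem_of_iso (hW.ker_mem (hDU (Or.inr hT)) (hfilt A hg.1) g) e.symm

end Paper
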